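/- arXiv:0804.0600 — 2 statements merged into one kernel-verified Lean document; each statement's English description precedes it below -/
import Mathlib

section
/- Let p be a prime and 0 ≤ a ≤ b integers with a + b odd. Define F(X) = (1 + p^(-1) X)(1 - p^(-2) X) · ∑_{ℓ=0}^{a} (pX)^ℓ · ( ∑_{k=0}^{a+b-2ℓ} (-X)^k ) as a polynomial in X over the rationals. Then -(1 - p^(-2))^(-1) (1 + p^(-1))^(-1) · F'(1) = (1/2) ∑_{ℓ=0}^{a} p^ℓ (a + b - 2ℓ + 1). -/
/-!
Since `a + b = 2n + 1` is odd, every inner alternating sum has an even number of terms and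
factors as `(1 - X) ∑_{j ≤ t} X^{2j}` with `2t + 1 = a + b - 2ℓ`. So `F = (1 - X) Q` and
`F'(1) = -Q(1)`; the two linear factors of `Q` contribute `(1 + p⁻¹)(1 - p⁻²)` at `X = 1`, and the
remaining sum evaluates to `∑_ℓ p^ℓ (n - ℓ + 1)`.
-/

open Polynomial

/-- Nagaoka's polynomial `F(X) = (1 + p⁻¹X)(1 - p⁻²X) ∑_{ℓ=0}^{a} (pX)^ℓ ∑_{k=0}^{a+b-2ℓ} (-X)^k`. -/
noncomputable def nagaokaF (p a b : ℕ) : Polynomial ℚ :=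
  (1 + C ((p : ℚ)⁻¹) * X) * (1 - C (((p : ℚ) ^ 2)⁻¹) * X) *
    ∑ ℓ ∈ Finset.range (a + 1),
      (C (p : ℚ) * X) ^ ℓ * ∑ k ∈ Finset.range (a + b - 2 * ℓ + 1), (-X) ^ k

open Finset

theorem sum_range_neg_pow_two_mul_add_two {R : Type*} [CommRing R] (x : R) (t : ℕ) :
    ∑ k ∈ range (2 * t + 2), (-x) ^ k = (1 - x) * ∑ j ∈ range (t + 1), x ^ (2 * j) := by
  induction t with
  | zero => simp [sum_range_succ]; ring
  | succ t ih =>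
    rw [show 2 * (t + 1) + 2 = 2 * t + 2 + 1 + 1 by ring, sum_range_succ, sum_range_succ, ih,
      sum_range_succ (n := t + 1), Even.neg_pow ⟨t + 1, by ring⟩, Odd.neg_pow ⟨t + 1, by ring⟩]
    ring

theorem nagaokaF_eq_one_sub_X_mul (p a b n : ℕ) (hab : a ≤ b) (hn : a + b = 2 * n + 1) :
    nagaokaF p a b = (1 - X) * ((1 + C ((p : ℚ)⁻¹) * X) * (1 - C (((p : ℚ) ^ 2)⁻¹) * X) *
      ∑ ℓ ∈ range (a + 1), (C (p : ℚ) * X) ^ ℓ * ∑ j ∈ range (n - ℓ + 1), X ^ (2 * j)) := by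
  rw [nagaokaF, mul_left_comm (1 - X), mul_sum _ _ (1 - X)]
  congr 1
  refine sum_congr rfl fun ℓ hℓ => ?_
  have hlen : a + b - 2 * ℓ + 1 = 2 * (n - ℓ) + 2 := by
    rw [mem_range] at hℓ
    omega
  rw [hlen, sum_range_neg_pow_two_mul_add_two]
  ring

theorem nagaokaF_derivative_eval_one_eq (p a b n : ℕ) (hab : a ≤ b) (hn : a + b = 2 * n + 1) :
    (nagaokaF p a b).derivative.eval 1 = -((1 + (p : ℚ)⁻¹) * (1 - ((p : ℚ) ^ 2)⁻¹) *
      ∑ ℓ ∈ range (a + 1), (p : ℚ) ^ ℓ * ((n - ℓ + 1 : ℕ) : ℚ)) := by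
  rw [nagaokaF_eq_one_sub_X_mul p a b n hab hn]
  simp [eval_finsetSum]

/-- For `0 ≤ a ≤ b` with `a + b` odd,
`-(1 - p⁻²)⁻¹ (1 + p⁻¹)⁻¹ F'(1) = (1/2) ∑_{ℓ=0}^{a} p^ℓ (a + b - 2ℓ + 1)`. -/
theorem nagaokaF_derivative_eval_one (p a b : ℕ) (hp : p.Prime) (hab : a ≤ b)
    (habodd : Odd (a + b)) :
    -((1 - ((p : ℚ) ^ 2)⁻¹)⁻¹ * (1 + (p : ℚ)⁻¹)⁻¹ *
        ((nagaokaF p a b).derivative.eval 1))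
      = (1 / 2) * ∑ ℓ ∈ Finset.range (a + 1),
          (p : ℚ) ^ ℓ * ((a : ℚ) + (b : ℚ) - 2 * (ℓ : ℚ) + 1) := by
  obtain ⟨n, hn⟩ := habodd
  have hp1 : (1 : ℚ) < p := by exact_mod_cast hp.one_lt
  have hsub : 1 - ((p : ℚ) ^ 2)⁻¹ ≠ 0 :=
    sub_ne_zero.2 (inv_lt_one_of_one_lt₀ (one_lt_pow₀ hp1 two_ne_zero)).ne'
  have hadd : 1 + (p : ℚ)⁻¹ ≠ 0 := by positivity
  have hcancel : (1 - ((p : ℚ) ^ 2)⁻¹)⁻¹ * (1 + (p : ℚ)⁻¹)⁻¹ *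
      ((1 + (p : ℚ)⁻¹) * (1 - ((p : ℚ) ^ 2)⁻¹)) = 1 := by
    rw [mul_comm (1 + _), mul_mul_mul_comm, inv_mul_cancel₀ hsub, inv_mul_cancel₀ hadd, one_mul]
  have hn' : (a : ℚ) + b = 2 * n + 1 := by exact_mod_cast hn
  rw [nagaokaF_derivative_eval_one_eq p a b n hab hn, mul_neg, neg_neg, ← mul_assoc, hcancel,
    one_mul, mul_sum]
  refine sum_congr rfl fun ℓ hℓ => ?_
  rw [mem_range] at hℓ
  rw [Nat.cast_add, Nat.cast_sub (by omega), hn']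
  ring
end

section
/- Let p be a prime, W the Witt vectors of F̄_p, A = W[[t]] with σ: A → A the ring endomorphism acting as Frobenius on W and σ(t) = t^p. With U = [[0,1],[p,t]], Ŭ = [[0,1],[p,−t]], S = [[0,1],[p,0]] and the recursion Y(n+1) = U^{-1}σ(X(n))S, X(n+1) = Ŭ^{-1}σ(Y(n))S starting from X(0) = [[p^r,0],[0,0]], Y(0) = [[0,0],[0,p^r]] (for r ≥ 0, over A[1/p]): the upper-right entry of Y(2s+1) is ±p^{r−s−1}·t^{(p^{2s+1}−1)/(p−1)} + p^{r−s}·(element of W[t]) for all 0 ≤ s ≤ r, and moreover X(2i)=X(2i+1) and Y(2i+1)=Y(2i+2) for all i ≥ 0. -/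
/-!
Both matrices are of the form `U⁻¹ M S` with `U = !![0, 1; q, u]`, whose entries are explicit
in those of `M`. Since `σ` fixes `p ^ r`, `X(0) = X(1)`, and the recursion passes an equality
`X(n) = X(n+1)` on to `Y(n+1) = Y(n+2)` and vice versa.

Two steps of the recursion act on the right column `(b, d)` of `Y` by
`b ↦ σ²b - p⁻¹(t^(p+1) σ²b + t σ²d)`, `d ↦ σ²d + t^p σ²b`.
If `b ≡ ±p^(r-s-1) t^N` modulo `p^(r-s) A₀` and `d ∈ p^(r-s) A₀`, then modulo `p^(r-s-1) A₀`
only `-p⁻¹ t^(p+1) σ²b` survives, so the sign flips and `N` becomes `p²N + p + 1`.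
Here `A₀` stands for `W[t]` inside `W[t][1/p]`.
-/
open Matrix

/-- The pair of matrix sequences `(X(n), Y(n))` of Zink's display recursion:
`X(0) = [[p^r,0],[0,0]]`, `Y(0) = [[0,0],[0,p^r]]`,
`X(n+1) = Ŭ⁻¹ σ(Y(n)) S`, `Y(n+1) = U⁻¹ σ(X(n)) S`, with
`U = [[0,1],[p,t]]`, `Ŭ = [[0,1],[p,−t]]`, `S = [[0,1],[p,0]]`. -/
noncomputable def zinkSeq (p : ℕ) (B : Type) [CommRing B] [Invertible (p : B)]
    (σ : B →+* B) (t : B) (r : ℕ) :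
    ℕ → Matrix (Fin 2) (Fin 2) B × Matrix (Fin 2) (Fin 2) B
  | 0 => (!![(p : B) ^ r, 0; 0, 0], !![0, 0; 0, (p : B) ^ r])
  | n + 1 =>
      ((!![0, 1; (p : B), -t])⁻¹ * ((zinkSeq p B σ t r n).2.map σ) * !![0, 1; (p : B), 0],
       (!![0, 1; (p : B), t])⁻¹ * ((zinkSeq p B σ t r n).1.map σ) * !![0, 1; (p : B), 0])

section

variable {B : Type} [CommRing B]

lemma inv_fin_two_zero_one (q u : B) [Invertible q] :
    (!![0, 1; q, u])⁻¹ = !![-(⅟q * u), ⅟q; 1, 0] :=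
  Matrix.inv_eq_right_inv <| by simp [Matrix.one_fin_two]

lemma inv_fin_two_zero_one_mul_mul (q u : B) [Invertible q] (M : Matrix (Fin 2) (Fin 2) B) :
    (!![0, 1; q, u])⁻¹ * M * !![0, 1; q, 0]
      = !![M 1 1 - u * M 0 1, ⅟q * (M 1 0 - u * M 0 0); q * M 0 1, M 0 0] := by
  rw [inv_fin_two_zero_one, M.eta_fin_two, Matrix.mul_fin_two, Matrix.mul_fin_two]
  ext i j
  fin_cases i <;> fin_cases j <;> simp
  · linear_combination (M 1 1 - u * M 0 1) * invOf_mul_self q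
  all_goals ring

lemma RingHom.map_invOf_natCast (σ : B →+* B) (n : ℕ) [Invertible (n : B)] :
    σ ⅟(n : B) = ⅟(n : B) :=
  (invOf_eq_left_inv (by rw [← map_one σ, ← invOf_mul_self (n : B), map_mul, map_natCast])).symm

end

section

variable {p : ℕ} {B : Type} [CommRing B] [Invertible (p : B)] {σ : B →+* B} {t : B} {r : ℕ}

lemma zinkSeq_succ (n : ℕ) :
    zinkSeq p B σ t r (n + 1) =
      (!![σ ((zinkSeq p B σ t r n).2 1 1) + t * σ ((zinkSeq p B σ t r n).2 0 1),
          ⅟(p : B) * (σ ((zinkSeq p B σ t r n).2 1 0) + t * σ ((zinkSeq p B σ t r n).2 0 0));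
          p * σ ((zinkSeq p B σ t r n).2 0 1), σ ((zinkSeq p B σ t r n).2 0 0)],
       !![σ ((zinkSeq p B σ t r n).1 1 1) - t * σ ((zinkSeq p B σ t r n).1 0 1),
          ⅟(p : B) * (σ ((zinkSeq p B σ t r n).1 1 0) - t * σ ((zinkSeq p B σ t r n).1 0 0));
          p * σ ((zinkSeq p B σ t r n).1 0 1), σ ((zinkSeq p B σ t r n).1 0 0)]) := by
  rw [zinkSeq, inv_fin_two_zero_one_mul_mul, inv_fin_two_zero_one_mul_mul]
  simp [sub_eq_add_neg]

lemma zinkSeq_fst_zero_eq_one : (zinkSeq p B σ t r 0).1 = (zinkSeq p B σ t r 1).1 := by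
  rw [zinkSeq_succ]
  simp [zinkSeq]

lemma zinkSeq_snd_succ_eq_of_fst_eq {n : ℕ}
    (h : (zinkSeq p B σ t r n).1 = (zinkSeq p B σ t r (n + 1)).1) :
    (zinkSeq p B σ t r (n + 1)).2 = (zinkSeq p B σ t r (n + 2)).2 :=
  congrArg (fun M ↦ (!![0, 1; (p : B), t])⁻¹ * M.map σ * !![0, 1; (p : B), 0]) h

lemma zinkSeq_fst_succ_eq_of_snd_eq {n : ℕ}
    (h : (zinkSeq p B σ t r n).2 = (zinkSeq p B σ t r (n + 1)).2) :
    (zinkSeq p B σ t r (n + 1)).1 = (zinkSeq p B σ t r (n + 2)).1 :=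
  congrArg (fun M ↦ (!![0, 1; (p : B), -t])⁻¹ * M.map σ * !![0, 1; (p : B), 0]) h

lemma zinkSeq_periodic (i : ℕ) :
    (zinkSeq p B σ t r (2 * i)).1 = (zinkSeq p B σ t r (2 * i + 1)).1 ∧
      (zinkSeq p B σ t r (2 * i + 1)).2 = (zinkSeq p B σ t r (2 * i + 2)).2 := by
  induction i with
  | zero => exact ⟨zinkSeq_fst_zero_eq_one, zinkSeq_snd_succ_eq_of_fst_eq zinkSeq_fst_zero_eq_one⟩
  | succ i ih =>
    have h := zinkSeq_fst_succ_eq_of_snd_eq ih.2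
    exact ⟨h, zinkSeq_snd_succ_eq_of_fst_eq h⟩

lemma zinkSeq_snd_add_two (hσt : σ t = t ^ p) (n : ℕ) :
    (zinkSeq p B σ t r (n + 2)).2 0 1 = σ (σ ((zinkSeq p B σ t r n).2 0 1))
        - ⅟(p : B) * (t ^ (p + 1) * σ (σ ((zinkSeq p B σ t r n).2 0 1))
          + t * σ (σ ((zinkSeq p B σ t r n).2 1 1))) ∧
      (zinkSeq p B σ t r (n + 2)).2 1 1 = σ (σ ((zinkSeq p B σ t r n).2 1 1))
        + t ^ p * σ (σ ((zinkSeq p B σ t r n).2 0 1)) := by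
  rw [zinkSeq_succ, zinkSeq_succ]
  simp only [Matrix.of_apply, Matrix.cons_val', Matrix.cons_val_zero, Matrix.cons_val_one,
    Matrix.empty_val', Matrix.cons_val_fin_one, map_add, map_mul, map_natCast, hσt, and_true]
  linear_combination σ (σ ((zinkSeq p B σ t r n).2 0 1)) * invOf_mul_self (p : B)

lemma exists_zinkSeq_snd_odd_eq (hσt : σ t = t ^ p) {A₀ : Subring B} (ht : t ∈ A₀)
    (hσA : ∀ x ∈ A₀, σ x ∈ A₀) {s : ℕ} (hs : s ≤ r) :
    ∃ P ∈ A₀, ∃ Q ∈ A₀,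
      (zinkSeq p B σ t r (2 * s + 1)).2 0 1 = (-1) ^ (s + 1) * (p : B) ^ (r - s) * ⅟(p : B)
          * t ^ (∑ i ∈ Finset.range (2 * s + 1), p ^ i) + (p : B) ^ (r - s) * P ∧
      (zinkSeq p B σ t r (2 * s + 1)).2 1 1 = (p : B) ^ (r - s) * Q := by
  induction s with
  | zero =>
    refine ⟨0, zero_mem _, 1, one_mem _, ?_, ?_⟩ <;> rw [zinkSeq_succ]
    · simp [zinkSeq]
      ring
    · simp [zinkSeq]
  | succ s ih =>
    obtain ⟨P, hP, Q, hQ, hb, hd⟩ := ih (by omega)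
    obtain ⟨m, hm⟩ : ∃ m, r - s = m + 1 := ⟨r - (s + 1), by omega⟩
    obtain ⟨hb', hd'⟩ := zinkSeq_snd_add_two (r := r) hσt (2 * s + 1)
    rw [hb, hd, hm] at hb' hd'
    simp only [map_add, map_mul, map_pow, map_neg, map_one, map_natCast,
      RingHom.map_invOf_natCast, hσt] at hb' hd'
    set N := ∑ i ∈ Finset.range (2 * s + 1), p ^ i
    have hN : ∑ i ∈ Finset.range (2 * s + 1 + 2), p ^ i = p * (p * N + 1) + 1 := by
      rw [geom_sum_succ, geom_sum_succ]
    rw [show 2 * (s + 1) + 1 = 2 * s + 1 + 2 by ring, hN, hb', hd', show r - (s + 1) = m by omega]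
    have hτ : ∀ x ∈ A₀, σ (σ x) ∈ A₀ := fun x hx ↦ hσA _ (hσA _ hx)
    refine ⟨(-1) ^ (s + 1) * t ^ (p * (p * N)) + p * σ (σ P) - t ^ (p + 1) * σ (σ P)
        - t * σ (σ Q), ?_, p * σ (σ Q) + (-1) ^ (s + 1) * t ^ (p * (p * N) + p)
        + p * t ^ p * σ (σ P), ?_, ?_, ?_⟩
    · apply_rules [add_mem, sub_mem, mul_mem, pow_mem, neg_mem, one_mem, natCast_mem, hτ]
    · apply_rules [add_mem, sub_mem, mul_mem, pow_mem, neg_mem, one_mem, natCast_mem, hτ]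
    · linear_combination (p : B) ^ m * ((-1) ^ (s + 1) * t ^ (p * (p * N))
        - (-1) ^ (s + 1) * ⅟(p : B) * t ^ (p + 1) * t ^ (p * (p * N))
        - t ^ (p + 1) * σ (σ P) - t * σ (σ Q)) * mul_invOf_self (p : B)
    · linear_combination (-1) ^ (s + 1) * (p : B) ^ m * t ^ p * t ^ (p * (p * N))
        * mul_invOf_self (p : B)

end

theorem zink_recursion_general (p : ℕ) (B : Type) [CommRing B]
    [Invertible (p : B)] (σ : B →+* B) (t : B) (hσt : σ t = t ^ p)
    (A₀ : Subring B) (ht : t ∈ A₀) (hσA : ∀ x ∈ A₀, σ x ∈ A₀) (r : ℕ) :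
    (∀ i : ℕ, (zinkSeq p B σ t r (2 * i)).1 = (zinkSeq p B σ t r (2 * i + 1)).1 ∧
       (zinkSeq p B σ t r (2 * i + 1)).2 = (zinkSeq p B σ t r (2 * i + 2)).2) ∧
    (∀ s : ℕ, s ≤ r → ∃ ε P : B, (ε = 1 ∨ ε = -1) ∧ P ∈ A₀ ∧
       (zinkSeq p B σ t r (2 * s + 1)).2 0 1
         = ε * (p : B) ^ (r - s) * ⅟(p : B) * t ^ (∑ i ∈ Finset.range (2 * s + 1), p ^ i)
             + (p : B) ^ (r - s) * P) := by
  refine ⟨zinkSeq_periodic, fun s hs ↦ ?_⟩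
  obtain ⟨P, hP, -, -, hb, -⟩ := exists_zinkSeq_snd_odd_eq hσt ht hσA hs
  exact ⟨(-1) ^ (s + 1), P, neg_one_pow_eq_or B (s + 1), hP, hb⟩

/-- Key claim in Zink's computation: `X(2i) = X(2i+1)` and `Y(2i+1) = Y(2i+2)` for all `i`,
and for `0 ≤ s ≤ r` the upper-right entry of `Y(2s+1)` equals
`± p^{r−s−1} t^{p^{2s}+⋯+p+1} + p^{r−s}·P` with `P` in the "integral" subring `A₀`
(playing the role of `W[t]` inside `W[t][1/p]`). -/
theorem zink_recursion (p : ℕ) (hp : p.Prime) (B : Type) [CommRing B]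
    [Invertible (p : B)] (σ : B →+* B) (t : B) (hσt : σ t = t ^ p)
    (A₀ : Subring B) (ht : t ∈ A₀) (hσA : ∀ x ∈ A₀, σ x ∈ A₀) (r : ℕ) :
    (∀ i : ℕ, (zinkSeq p B σ t r (2 * i)).1 = (zinkSeq p B σ t r (2 * i + 1)).1 ∧
       (zinkSeq p B σ t r (2 * i + 1)).2 = (zinkSeq p B σ t r (2 * i + 2)).2) ∧
    (∀ s : ℕ, s ≤ r → ∃ ε P : B, (ε = 1 ∨ ε = -1) ∧ P ∈ A₀ ∧
       (zinkSeq p B σ t r (2 * s + 1)).2 0 1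
         = ε * (p : B) ^ (r - s) * ⅟(p : B) * t ^ (∑ i ∈ Finset.range (2 * s + 1), p ^ i)
             + (p : B) ^ (r - s) * P) :=
  zink_recursion_general p B σ t hσt A₀ ht hσA r
end
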